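/- arXiv:math/0309153 — 7 statements merged into one kernel-verified Lean document; each statement's English description precedes it below -/
import Mathlib

section
/- Let F be a field of characteristic zero, n, r ≥ 1 integers, and x ∈ (Fⁿ)ʳ. Let Σ ⊆ ℕʳ be a finite set such that the vectors {χ_σ(x) : σ ∈ Σ} span an F-subspace of Fⁿ of dimension strictly greater than n/2. Let W ⊆ Fⁿ be the F-span of {χ_σ(x) : σ ∈ Σ + Σ}. Then the orthogonal complement of W with respect to the bilinear form (u, v) ↦ Tr(u·v) = Σ_{j=1}^n u_j v_j is contained in a coordinate hyperplane: there exists j ∈ {1,…,n} such that every w ∈ Fⁿ satisfying Tr(u·w) = 0 for all u ∈ W has w_j = 0. -/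
/-!
Let `V` be the span of the `χ_σ(x)`, `σ ∈ Σ`; then `W = V * V` since `χ_{σ+τ} = χ_σ χ_τ`.
If `w ⊥ W` has no zero coordinate, it is a unit of `Fⁿ` and `v ↦ v * w` maps `V` injectively
into `V^⊥`, so `2 dim V ≤ n`. Hence `W^⊥` is covered by the `n` coordinate hyperplanes, and
since a vector space over an infinite field is not a finite union of proper subspaces, it lies
in one of them.
-/

open Module Pointwise

/-- The multisymmetric monomial map `χ_σ`: the coordinatewise product
`x_1^{σ_1} ⋯ x_r^{σ_r}` of the rows of `x`. -/
def chiMap {F : Type*} [CommRing F] {n r : ℕ} (σ : Fin r → ℕ) (x : Fin r → Fin n → F) :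
    Fin n → F :=
  fun j => ∏ k, x k j ^ σ k

/-- The trace map `Fⁿ → F`, the sum of the coordinates. -/
def trMap {F : Type*} [CommRing F] {n : ℕ} (v : Fin n → F) : F := ∑ j, v j

open Matrix Submodule

lemma trMap_mul {F : Type*} [CommRing F] {n : ℕ} (u w : Fin n → F) :
    trMap (u * w) = u ⬝ᵥ w := rfl

section Monomials

variable {F : Type*} [CommRing F] {n r : ℕ}

lemma chiMap_add (σ τ : Fin r → ℕ) (x : Fin r → Fin n → F) :
    chiMap (σ + τ) x = chiMap σ x * chiMap τ x := by
  funext j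
  simp [chiMap, pow_add, Finset.prod_mul_distrib]

lemma image_chiMap_add (x : Fin r → Fin n → F) (S T : Set (Fin r → ℕ)) :
    (fun σ => chiMap σ x) '' (S + T) =
      (fun σ => chiMap σ x) '' S * (fun σ => chiMap σ x) '' T :=
  Set.image_image2_distrib fun σ τ => chiMap_add σ τ x

end Monomials

section DotProduct

variable {ι K : Type*} [Fintype ι] [Field K]

lemma dotProductBilin_nondegenerate :
    (dotProductBilin K K : LinearMap.BilinForm K (ι → K)).Nondegenerate :=
  ⟨fun u hu => dotProduct_eq_zero u fun v => by simpa using hu v,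
    fun v hv => dotProduct_eq_zero v fun u => by simpa [dotProduct_comm] using hv u⟩

lemma mul_dotProduct_mul (u v w : ι → K) : u ⬝ᵥ (v * w) = (u * v) ⬝ᵥ w := by
  simp only [dotProduct, Pi.mul_apply, mul_assoc]

theorem two_mul_finrank_le_card_of_mul_self_orthogonal (V : Submodule K (ι → K)) {w : ι → K}
    (hw : IsUnit w) (hVw : ∀ u ∈ V * V, u ⬝ᵥ w = 0) :
    2 * finrank K V ≤ Fintype.card ι := by
  set B : LinearMap.BilinForm K (ι → K) := dotProductBilin K K
  have h_map_le : V.map (LinearMap.mulRight K w) ≤ B.orthogonal V := by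
    rintro _ ⟨v, hv, rfl⟩ u hu
    simpa [B, mul_dotProduct_mul] using hVw _ (mul_mem_mul hu hv)
  have h_le : finrank K V ≤ Fintype.card ι - finrank K V :=
    calc finrank K V = finrank K (V.map (LinearMap.mulRight K w)) :=
          (equivMapOfInjective _ hw.mul_left_injective V).finrank_eq
      _ ≤ finrank K (B.orthogonal V) := finrank_mono h_map_le
      _ = Fintype.card ι - finrank K V := by
          rw [LinearMap.BilinForm.finrank_orthogonal dotProductBilin_nondegenerate,
            finrank_fintype_fun_eq_card]
  have h_V_le : finrank K V ≤ Fintype.card ι := by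
    simpa only [finrank_fintype_fun_eq_card] using V.finrank_le
  omega

end DotProduct

theorem exists_forall_apply_eq_zero_of_forall_exists_apply_eq_zero {ι K : Type*} [Finite ι]
    [Field K] [Infinite K] (P : Submodule K (ι → K)) (hP : ∀ w ∈ P, ∃ i, w i = 0) :
    ∃ i, ∀ w ∈ P, w i = 0 := by
  have h_cover : ⋃ i, (LinearMap.ker ((LinearMap.proj i).comp P.subtype) : Set P) = Set.univ :=
    Set.eq_univ_of_forall fun w => by simpa using hP w w.2
  obtain ⟨i, hi⟩ := Subspace.exists_eq_top_of_iUnion_eq_univ h_cover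
  exact ⟨i, fun w hw => by simpa using LinearMap.congr_fun (LinearMap.ker_eq_top.mp hi) ⟨w, hw⟩⟩

theorem orthogonal_complement_in_coordinate_hyperplane_general
    (F : Type*) [Field F] [CharZero F] (n r : ℕ)
    (x : Fin r → Fin n → F) (S : Set (Fin r → ℕ))
    (hspan : n < 2 * finrank F (Submodule.span F ((fun σ => chiMap σ x) '' S))) :
    ∃ j : Fin n, ∀ w : Fin n → F,
      (∀ u ∈ Submodule.span F ((fun σ => chiMap σ x) '' (S + S)), trMap (u * w) = 0) →
      w j = 0 := by
  set V := span F ((fun σ => chiMap σ x) '' S)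
  have hVV : V * V = span F ((fun σ => chiMap σ x) '' (S + S)) := by
    rw [span_mul_span, image_chiMap_add]
  simp only [trMap_mul, ← hVV]
  have h_zero_coord :
      ∀ w ∈ LinearMap.BilinForm.orthogonal (dotProductBilin F F) (V * V), ∃ j, w j = 0 := by
    intro w hw
    by_contra! h_ne
    have := two_mul_finrank_le_card_of_mul_self_orthogonal V
      (Pi.isUnit_iff.mpr fun j => (h_ne j).isUnit) (by simpa using hw)
    rw [Fintype.card_fin] at this
    omega
  obtain ⟨j, hj⟩ := exists_forall_apply_eq_zero_of_forall_exists_apply_eq_zero _ h_zero_coord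
  exact ⟨j, fun w hw => hj w (by simpa using hw)⟩

/-- if the vectors `χ_σ(x)`, `σ ∈ Σ`, span a subspace of dimension `> n/2`,
then the orthogonal complement (for the trace pairing) of the span of the
`χ_σ(x)`, `σ ∈ Σ + Σ`, is contained in a coordinate hyperplane. -/
theorem orthogonal_complement_in_coordinate_hyperplane
    (F : Type*) [Field F] [CharZero F] (n r : ℕ) (hn : 1 ≤ n) (hr : 1 ≤ r)
    (x : Fin r → Fin n → F) (S : Set (Fin r → ℕ)) (hS : S.Finite)
    (hspan : n < 2 * finrank F (Submodule.span F ((fun σ => chiMap σ x) '' S))) :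
    ∃ j : Fin n, ∀ w : Fin n → F,
      (∀ u ∈ Submodule.span F ((fun σ => chiMap σ x) '' (S + S)), trMap (u * w) = 0) →
      w j = 0 :=
  orthogonal_complement_in_coordinate_hyperplane_general F n r x S hspan
end

section
/- Let F be a field of characteristic zero, n, r ≥ 1 integers, V ⊆ Fⁿ an F-subspace of dimension m ≥ 1, and Σ ⊆ ℕʳ a set of cardinality m. Let Z ⊆ Vʳ be the set of x ∈ Vʳ such that the m vectors {χ_σ(x) : σ ∈ Σ} are linearly dependent over F in Fⁿ. Then, after identifying Vʳ with F^{mr} by choosing coordinates with respect to a basis of V, Z is contained in the zero locus of a nonzero polynomial in mr variables over F whose total degree is at most Σ_{σ∈Σ}(σ_1 + ⋯ + σ_r); in particular, Z is not all of Vʳ. -/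
open Module

/-! Choose `m` coordinates `e_a` at which the basis of `V` restricts to an invertible matrix, so
that `x ↦ (x_k(e_a))_{k,a}` maps `Vʳ` onto `(Fʳ)^m`. The polynomial is the minor `det (χ_σ(x)(e_a))`
written in the coordinates of `x`: its entries are products of `σ_1 + ⋯ + σ_r` linear forms, and it
vanishes when the `χ_σ(x)` are dependent. It is nonzero because distinct monomials are linearly
independent functions on `Fʳ` over an infinite field, so some points `u_a ∈ Fʳ` give
`det (u_a^σ) ≠ 0`, and some `x` has `x_k(e_a) = (u_a)_k`. -/

open MvPolynomial

section EvaluationMinor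

variable {F α ι : Type*} [Field F] [Fintype ι] [DecidableEq ι]

theorem exists_det_ne_zero_of_linearIndependent {f : ι → α → F} (hf : LinearIndependent F f) :
    ∃ t : ι → α, (Matrix.of fun i j => f i (t j)).det ≠ 0 := by
  let v : α → ι → F := fun x i => f i x
  -- a functional killing every `v x` has coefficients forming a linear relation among the `f i`
  have hspan : ⊤ ≤ Submodule.span F (Set.range v) := by
    rw [top_le_iff]
    by_contra hne
    obtain ⟨φ, hφ0, hφ⟩ :=
      Submodule.exists_dual_map_eq_bot_of_lt_top (lt_top_iff_ne_top.mpr hne) inferInstance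
    have hc := Fintype.linearIndependent_iff.mp hf (fun i => φ fun j => if i = j then 1 else 0) <|
      funext fun x => by
        have hφx : φ (v x) = 0 := (Submodule.mem_bot F).mp
          (hφ ▸ Submodule.mem_map_of_mem (Submodule.subset_span ⟨x, rfl⟩))
        simpa [φ.pi_apply_eq_sum_univ (v x), v, mul_comm] using hφx
    exact hφ0 (LinearMap.ext fun w => by simp [φ.pi_apply_eq_sum_univ w, hc])
  let B := Basis.ofSpan hspan
  let eB := (Pi.basisFun F ι).indexEquiv B
  choose t ht using fun j => Basis.ofSpan_subset hspan ⟨eB j, rfl⟩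
  have hcols : (Matrix.of fun i j => f i (t j)).col = B ∘ eB := by
    ext j i
    exact congrFun (ht j) i
  refine ⟨t, ((Matrix.isUnit_iff_isUnit_det _).mp ?_).ne_zero⟩
  rw [← Matrix.linearIndependent_cols_iff_isUnit, hcols]
  exact B.linearIndependent.comp _ eB.injective

theorem linearIndependent_of_det_ne_zero {f : ι → α → F} {t : ι → α}
    (h : (Matrix.of fun i j => f i (t j)).det ≠ 0) : LinearIndependent F f :=
  LinearIndependent.of_comp (LinearMap.funLeft F F t) <|
    Matrix.linearIndependent_rows_iff_isUnit.mpr ((Matrix.isUnit_iff_isUnit_det _).mpr h.isUnit)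

theorem linearIndependent_iff_exists_det_ne_zero {f : ι → α → F} :
    LinearIndependent F f ↔ ∃ t : ι → α, (Matrix.of fun i j => f i (t j)).det ≠ 0 :=
  ⟨exists_det_ne_zero_of_linearIndependent, fun ⟨_, h⟩ => linearIndependent_of_det_ne_zero h⟩

end EvaluationMinor

theorem Submodule.exists_eval_surjective {F α ι : Type*} [Field F] [Fintype ι]
    {V : Submodule F (α → F)} (b : Basis ι F V) :
    ∃ e : ι → α, Function.Surjective fun g : V => fun a => (g : α → F) (e a) := by
  classical
  obtain ⟨e, he⟩ :=
    exists_det_ne_zero_of_linearIndependent (b.linearIndependent.map' V.subtype V.ker_subtype)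
  refine ⟨e, fun w => ?_⟩
  obtain ⟨c, hc⟩ := Matrix.vecMul_surjective_iff_isUnit.mpr
    ((Matrix.isUnit_iff_isUnit_det _).mpr he.isUnit) w
  refine ⟨∑ i, c i • b i, ?_⟩
  rw [← hc]
  ext a
  simp [Matrix.vecMul, dotProduct]

theorem linearIndependent_monomial_fns {F ι τ : Type*} [Field F] [Infinite F] [Fintype τ]
    {d : ι → τ → ℕ} (hd : Function.Injective d) :
    LinearIndependent F (fun i (u : τ → F) => ∏ k, u k ^ d i k) := by
  let evalₗ : MvPolynomial τ F →ₗ[F] (τ → F) → F := LinearMap.pi fun u => (aeval u).toLinearMap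
  have hinj : Function.Injective evalₗ := fun p q hpq =>
    MvPolynomial.funext fun u => congrFun hpq u
  have heval : (fun i (u : τ → F) => ∏ k, u k ^ d i k) =
      evalₗ ∘ fun i => monomial (Finsupp.equivFunOnFinite.symm (d i)) 1 := by
    funext i u
    simp [evalₗ, eval_monomial, Finsupp.prod_pow]
  rw [heval]
  exact ((basisMonomials τ F).linearIndependent.comp _
    (Finsupp.equivFunOnFinite.symm.injective.comp hd)).map' evalₗ (LinearMap.ker_eq_bot.mpr hinj)

theorem MvPolynomial.totalDegree_det_le {R τ ι : Type*} [CommRing R] [Fintype ι] [DecidableEq ι]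
    (M : Matrix ι ι (MvPolynomial τ R)) (d : ι → ℕ) (h : ∀ i j, (M i j).totalDegree ≤ d i) :
    M.det.totalDegree ≤ ∑ i, d i := by
  rw [Matrix.det_apply]
  refine (totalDegree_finsetSum _ _).trans (Finset.sup_le fun π _ => ?_)
  refine (totalDegree_smul_le _ _).trans ((totalDegree_finsetProd _ _).trans ?_)
  calc ∑ i, (M (π i) i).totalDegree ≤ ∑ i, d (π i) := Finset.sum_le_sum fun i _ => h (π i) i
    _ = ∑ i, d i := Equiv.sum_comp π d

theorem map_chiMap {R S : Type*} [CommRing R] [CommRing S] {n r : ℕ} (φ : R →+* S)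
    (σ : Fin r → ℕ) (x : Fin r → Fin n → R) (j : Fin n) :
    φ (chiMap σ x j) = chiMap σ (fun k j => φ (x k j)) j := by
  simp [chiMap]

theorem totalDegree_chiMap_le {R τ : Type*} [CommRing R] {n r : ℕ} (σ : Fin r → ℕ)
    {x : Fin r → Fin n → MvPolynomial τ R} (hx : ∀ k j, (x k j).totalDegree ≤ 1) (j : Fin n) :
    (chiMap σ x j).totalDegree ≤ ∑ k, σ k :=
  (totalDegree_finsetProd _ _).trans <| Finset.sum_le_sum fun k _ =>
    (totalDegree_pow _ _).trans (by simpa using Nat.mul_le_mul_left (σ k) (hx k j))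

section GenericTuple

variable {F α ι κ : Type*} [Field F] [Fintype ι] {V : Submodule F (α → F)}

noncomputable def genericTuple (b : Basis ι F V) (κ : Type*) : κ → α → MvPolynomial (ι × κ) F :=
  fun k j => ∑ i, C ((b i : α → F) j) * X (i, k)

theorem eval_genericTuple (b : Basis ι F V) (x : κ → V) (k : κ) (j : α) :
    eval (fun ik : ι × κ => b.repr (x ik.2) ik.1) (genericTuple b κ k j) = (x k : α → F) j := by
  simp only [genericTuple, map_sum, map_mul, eval_C, eval_X]
  conv_rhs => rw [← b.sum_repr (x k)]
  simp only [Submodule.coe_sum, Finset.sum_apply, SetLike.val_smul, Pi.smul_apply, smul_eq_mul,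
    mul_comm]

theorem totalDegree_genericTuple_le (b : Basis ι F V) (k : κ) (j : α) :
    (genericTuple b κ k j).totalDegree ≤ 1 :=
  (totalDegree_finsetSum _ _).trans <| Finset.sup_le fun i _ =>
    (totalDegree_mul _ _).trans (by simp)

end GenericTuple

theorem dependence_locus_in_hypersurface_general
    (F : Type*) [Field F] [CharZero F] (n r m : ℕ)
    (V : Submodule F (Fin n → F))
    (S : Finset (Fin r → ℕ)) (hScard : S.card = m)
    (b : Basis (Fin m) F V) :
    (∃ p : MvPolynomial (Fin m × Fin r) F, p ≠ 0 ∧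
      p.totalDegree ≤ ∑ σ ∈ S, ∑ k, σ k ∧
      ∀ x : Fin r → V,
        ¬ LinearIndependent F (fun σ : {σ // σ ∈ S} =>
            chiMap (σ : Fin r → ℕ) (fun k => (x k : Fin n → F))) →
        MvPolynomial.eval (fun ik : Fin m × Fin r => b.repr (x ik.2) ik.1) p = 0) ∧
    {x : Fin r → V | ¬ LinearIndependent F (fun σ : {σ // σ ∈ S} =>
        chiMap (σ : Fin r → ℕ) (fun k => (x k : Fin n → F)))} ≠ Set.univ := by
  obtain ⟨u, hu⟩ := exists_det_ne_zero_of_linearIndependent (F := F)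
    (linearIndependent_monomial_fns (Subtype.val_injective (p := (· ∈ S))))
  obtain ⟨e, he⟩ := Submodule.exists_eval_surjective
    (b.reindex (Fintype.equivFinOfCardEq (by simp [hScard]) : {σ // σ ∈ S} ≃ Fin m).symm)
  let p := (Matrix.of fun σ a : {σ // σ ∈ S} => chiMap σ.1 (genericTuple b (Fin r)) (e a)).det
  have eval_p (x : Fin r → V) : eval (fun ik => b.repr (x ik.2) ik.1) p =
      (Matrix.of fun σ a : {σ // σ ∈ S} => chiMap σ.1 (fun k => (x k : Fin n → F)) (e a)).det := by
    rw [RingHom.map_det]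
    congr 1
    ext σ a
    simp [map_chiMap, eval_genericTuple]
  have vanish (x : Fin r → V) (hx : ¬ LinearIndependent F fun σ : {σ // σ ∈ S} =>
      chiMap σ.1 fun k => (x k : Fin n → F)) : eval (fun ik => b.repr (x ik.2) ik.1) p = 0 := by
    rw [eval_p]
    by_contra h
    exact hx (linearIndependent_iff_exists_det_ne_zero.mpr ⟨e, h⟩)
  choose x₀ hx₀_restrict using fun k => he fun a => u a k
  have hx₀ (k : Fin r) (a : {σ // σ ∈ S}) : (x₀ k : Fin n → F) (e a) = u a k :=
    congrFun (hx₀_restrict k) a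
  have eval_p_x₀ : eval (fun ik => b.repr (x₀ ik.2) ik.1) p ≠ 0 := by
    rw [eval_p]
    convert hu using 3
    simp [chiMap, hx₀]
  refine ⟨⟨p, fun hp => eval_p_x₀ (by simp [hp]), ?_, vanish⟩, fun hZ => eval_p_x₀ (vanish x₀ ?_)⟩
  · refine (totalDegree_det_le _ (fun σ : {σ // σ ∈ S} => ∑ k, σ.1 k) fun σ a =>
      totalDegree_chiMap_le _ (totalDegree_genericTuple_le b) _).trans_eq ?_
    exact Finset.sum_coe_sort S fun σ => ∑ k, σ k
  · exact Set.eq_univ_iff_forall.mp hZ x₀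

/-- for a subspace `V ⊆ Fⁿ` of dimension `m` and a set `Σ` of `m` exponent
vectors, the locus `Z ⊆ Vʳ` where the vectors `χ_σ(x)` are linearly dependent is contained
in the zero locus of a nonzero polynomial (in the `mr` coordinates with respect to any basis
of `V`) of total degree at most `∑_{σ ∈ Σ} (σ_1 + ⋯ + σ_r)`; in particular `Z ≠ Vʳ`. -/
theorem dependence_locus_in_hypersurface
    (F : Type*) [Field F] [CharZero F] (n r m : ℕ) (hn : 1 ≤ n) (hr : 1 ≤ r) (hm : 1 ≤ m)
    (V : Submodule F (Fin n → F)) (hV : finrank F V = m)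
    (S : Finset (Fin r → ℕ)) (hScard : S.card = m)
    (b : Basis (Fin m) F V) :
    (∃ p : MvPolynomial (Fin m × Fin r) F, p ≠ 0 ∧
      p.totalDegree ≤ ∑ σ ∈ S, ∑ k, σ k ∧
      ∀ x : Fin r → V,
        ¬ LinearIndependent F (fun σ : {σ // σ ∈ S} =>
            chiMap (σ : Fin r → ℕ) (fun k => (x k : Fin n → F))) →
        MvPolynomial.eval (fun ik : Fin m × Fin r => b.repr (x ik.2) ik.1) p = 0) ∧
    {x : Fin r → V | ¬ LinearIndependent F (fun σ : {σ // σ ∈ S} =>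
        chiMap (σ : Fin r → ℕ) (fun k => (x k : Fin n → F)))} ≠ Set.univ :=
  dependence_locus_in_hypersurface_general F n r m V S hScard b
end

section
/- Let F be a field of characteristic zero and W ⊆ Fⁿ an F-subspace such that every vector w ∈ W has at least one coordinate equal to zero. Then there exists an index j ∈ {1,…,n} such that w_j = 0 for every w ∈ W; that is, a subspace of Fⁿ contained in the union of the coordinate hyperplanes is contained in a single coordinate hyperplane. -/
/-- A subspace of `Fⁿ` contained in the union of the coordinate
hyperplanes is contained in a single coordinate hyperplane. -/
theorem subspace_in_union_of_hyperplanes_in_single_hyperplane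
    (F : Type*) [Field F] [CharZero F] (n : ℕ)
    (W : Submodule F (Fin n → F))
    (h : ∀ w ∈ W, ∃ j : Fin n, w j = 0) :
    ∃ j : Fin n, ∀ w ∈ W, w j = 0 := by
  have : Infinite F := Infinite.of_injective _ Nat.cast_injective
  set p : Fin n → Subspace F W :=
    fun j => LinearMap.ker ((LinearMap.proj j).comp W.subtype) with hp
  have hcovers : ⋃ i, (p i : Set W) = Set.univ := by
    ext w
    simp only [Set.mem_iUnion, Set.mem_univ, iff_true, SetLike.mem_coe, hp,
      LinearMap.mem_ker, LinearMap.comp_apply, Submodule.coe_subtype, LinearMap.proj_apply]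
    exact h w w.2
  obtain ⟨j, hj⟩ := Subspace.exists_eq_top_of_iUnion_eq_univ hcovers
  refine ⟨j, fun w hw => ?_⟩
  have := hj ▸ Submodule.mem_top (R := F) (x := (⟨w, hw⟩ : W))
  simpa [hp] using this
end

section
/- Let K be a number field of degree d over ℚ and let B ≥ 0 be a real number. Then the number of elements x ∈ 𝓞_K with house(x) ≤ B is at most (2B+1)^d. -/
/-!
Reduction modulo `n = ⌊2B⌋ + 1` is injective on the integers of house at most `B`: the difference
of two congruent ones is `n` times an algebraic integer of house at most `2B / n < 1`, and a
nonzero algebraic integer has house at least `1`. As `𝓞 K ⧸ n 𝓞 K` has `n ^ d ≤ (2B + 1) ^ d`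
elements, this gives both finiteness and the bound.
-/

open NumberField Module

namespace NumberField

variable {K : Type*} [Field K] [NumberField K]

theorem house_sub_le (α β : K) : house (α - β) ≤ house α + house β := by
  simp only [house, map_sub]
  exact norm_sub_le _ _

namespace RingOfIntegers

theorem natCard_quotient_span_natCast (n : ℕ) :
    Nat.card (𝓞 K ⧸ Ideal.span {(n : 𝓞 K)}) = n ^ finrank ℚ K := by
  rw [← RingOfIntegers.rank, ← Ideal.absNorm_span_natCast, Ideal.absNorm_apply,
    Submodule.cardQuot_apply]

theorem finite_quotient_span_natCast {n : ℕ} (hn : n ≠ 0) :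
    Finite (𝓞 K ⧸ Ideal.span {(n : 𝓞 K)}) :=
  Nat.finite_of_card_ne_zero <| by rw [natCard_quotient_span_natCast]; positivity

theorem eq_of_sub_mem_span_natCast {B : ℝ} {n : ℕ} (hn : 2 * B < n) {x y : 𝓞 K}
    (hx : house (x : K) ≤ B) (hy : house (y : K) ≤ B) (h : x - y ∈ Ideal.span {(n : 𝓞 K)}) :
    x = y := by
  obtain ⟨z, hz⟩ := Ideal.mem_span_singleton.mp h
  by_contra hxy
  have hz0 : (z : K) ≠ 0 := by
    intro hz0
    exact hxy (sub_eq_zero.mp (by rw [hz, RingOfIntegers.coe_eq_zero_iff.mp hz0, mul_zero]))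
  have hzK : (x : K) - y = n * z := by exact_mod_cast congrArg ((↑) : 𝓞 K → K) hz
  have : (n : ℝ) * house (z : K) ≤ 2 * B := by
    rw [← house_nat_mul, ← hzK]
    linarith [house_sub_le (x : K) y]
  nlinarith [one_le_house_of_isIntegral z.isIntegral_coe hz0]

theorem injective_mk_of_house_le {B : ℝ} {n : ℕ} (hn : 2 * B < n) :
    Function.Injective fun x : {x : K | IsIntegral ℤ x ∧ house x ≤ B} ↦
      Ideal.Quotient.mk (Ideal.span {(n : 𝓞 K)}) ⟨x.1, x.2.1⟩ := by
  intro x y hxy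
  have h : (⟨x.1, x.2.1⟩ : 𝓞 K) = ⟨y.1, y.2.1⟩ :=
    eq_of_sub_mem_span_natCast hn x.2.2 y.2.2 (Ideal.Quotient.eq.mp hxy)
  exact Subtype.ext (congrArg ((↑) : 𝓞 K → K) h)

theorem finite_setOf_house_le_and_natCard_le {B : ℝ} {n : ℕ} (hn0 : n ≠ 0) (hn : 2 * B < n) :
    {x : K | IsIntegral ℤ x ∧ house x ≤ B}.Finite ∧
      Nat.card {x : K | IsIntegral ℤ x ∧ house x ≤ B} ≤ n ^ finrank ℚ K := by
  have := finite_quotient_span_natCast (K := K) hn0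
  refine ⟨Finite.of_injective _ (injective_mk_of_house_le hn), ?_⟩
  rw [← natCard_quotient_span_natCast]
  exact Nat.card_le_card_of_injective _ (injective_mk_of_house_le hn)

end RingOfIntegers

end NumberField

/-- a number field `K` of degree `d` over `ℚ` has at most `(2B+1)^d`
integers of house at most `B`. -/
theorem card_ringOfIntegers_house_le
    (K : Type*) [Field K] [NumberField K] (B : ℝ) (hB : 0 ≤ B) :
    {x : K | IsIntegral ℤ x ∧ NumberField.house x ≤ B}.Finite ∧
      (Nat.card {x : K | IsIntegral ℤ x ∧ NumberField.house x ≤ B} : ℝ) ≤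
        (2 * B + 1) ^ (finrank ℚ K) := by
  set n := ⌊2 * B⌋₊ + 1
  have h2B_lt : 2 * B < n := by
    simpa [n] using Nat.lt_floor_add_one (2 * B)
  have hn_le : (n : ℝ) ≤ 2 * B + 1 := by
    simpa [n] using Nat.floor_le (by positivity : (0 : ℝ) ≤ 2 * B)
  obtain ⟨hfin, hcard⟩ :=
    RingOfIntegers.finite_setOf_house_le_and_natCard_le (K := K) (Nat.add_one_ne_zero _) h2B_lt
  refine ⟨hfin, ?_⟩
  calc (Nat.card {x : K | IsIntegral ℤ x ∧ house x ≤ B} : ℝ) ≤ (n : ℝ) ^ finrank ℚ K := by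
        exact_mod_cast hcard
    _ ≤ (2 * B + 1) ^ finrank ℚ K := by gcongr
end

section
/- Let K be a number field of degree d over ℚ, and let L be a finite extension of K of degree n ≥ 2 (inside a fixed algebraic closure of K) such that L/K has no proper subextensions, i.e., there is no intermediate field M with K ⊊ M ⊊ L. Then there exists a constant c > 0, depending only on n and d, such that every nonzero x ∈ 𝓞_L with Tr^L_K(x) = 0 satisfies house(x) ≥ c · Δ_{L/K}^{1/(n(n−1)d)}. -/
open NumberField Module

/-- `Δ_{L/K}`: the absolute norm of the relative discriminant of `L/K`, computed as the
absolute norm of the different ideal of `𝓞_L` over `𝓞_K` (and junk value `0` if `L/K` is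
not finite). -/
noncomputable def relDiscNorm (K : Type*) [Field K] [NumberField K]
    {Kbar : Type*} [Field Kbar] [Algebra K Kbar]
    (L : IntermediateField K Kbar) : ℕ := by
  classical
  exact if h : FiniteDimensional K L then
    haveI : CharZero L := charZero_of_injective_algebraMap (algebraMap K L).injective
    haveI : FiniteDimensional ℚ L := Module.Finite.trans (R := ℚ) K L
    haveI : NumberField L :=
      { to_charZero := inferInstance, to_finiteDimensional := inferInstance }
    Ideal.absNorm (differentIdeal (𝓞 K) (𝓞 L))
  else 0

/-- The house of an algebraic integer: the largest complex absolute value of the roots of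
its minimal polynomial over `ℤ`. -/
noncomputable def house' {F : Type*} [Field F] (x : F) : ℝ :=
  sSup ((fun z : ℂ => ‖z‖) '' ((minpoly ℤ x).rootSet ℂ))

/-!
A nonzero `x` of trace zero does not lie in `K`, so it generates `L` and `f'(x)`, for `f` the
minimal polynomial of `x` over `K`, lies in the different; hence `Δ_{L/K} ≤ |N_{L/ℚ}(f'(x))|`.
Under an embedding `τ : L → ℂ`, `τ (f'(x))` is the product of `τ x - a` over the remaining
`n - 1` roots `a` of `f^τ`, which are conjugates of `x`, so `|τ (f'(x))| ≤ (2 house x)^(n-1)`.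
Multiplying over the `dn` embeddings gives `Δ_{L/K} ≤ (2 house x)^(n(n-1)d)`, so `c = 1/2` works.
-/

open Polynomial IntermediateField

theorem Polynomial.Splits.norm_eval_derivative_le {k : Type*} [NormedField k] {f : k[X]}
    (hf : f.Splits) (hm : f.Monic) {B : ℝ} (hB : ∀ a ∈ f.roots, ‖a‖ ≤ B) {z : k}
    (hz : z ∈ f.roots) : ‖f.derivative.eval z‖ ≤ (2 * B) ^ (f.natDegree - 1) := by
  classical
  have hcard : Multiset.card ((f.roots.erase z).map (z - ·)) = f.natDegree - 1 := by
    rw [Multiset.card_map, Multiset.card_erase_of_mem hz, hf.natDegree_eq_card_roots,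
      Nat.pred_eq_sub_one]
  rw [hf.eval_root_derivative hm hz, ← hcard, ← normHom_apply, map_multiset_prod]
  refine Multiset.prod_map_le_pow_card (fun w _ ↦ norm_nonneg w) fun w hw ↦ ?_
  obtain ⟨a, ha, rfl⟩ := Multiset.mem_map.1 hw
  calc ‖z - a‖ ≤ ‖z‖ + ‖a‖ := norm_sub_le z a
    _ ≤ 2 * B := by linarith [hB z hz, hB a (Multiset.mem_of_mem_erase ha)]

theorem Ideal.absNorm_le_abs_norm_of_mem {S : Type*} [CommRing S] [IsDedekindDomain S]
    [Module.Free ℤ S] [Module.Finite ℤ S] {I : Ideal S} {y : S} (hy : y ∈ I) (hy0 : y ≠ 0) :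
    (absNorm I : ℤ) ≤ |Algebra.norm ℤ y| :=
  Int.le_of_dvd (abs_pos.2 (Algebra.norm_ne_zero_iff.2 hy0))
    ((dvd_abs _ _).2 (absNorm_dvd_norm_of_mem hy))

theorem IntermediateField.adjoin_simple_eq_top_of_trace_eq_zero {K L : Type*} [Field K]
    [CharZero K] [Field L] [Algebra K L] [FiniteDimensional K L]
    (h : ∀ M : IntermediateField K L, M = ⊥ ∨ M = ⊤) {x : L} (hx0 : x ≠ 0)
    (htr : Algebra.trace K L x = 0) : K⟮x⟯ = ⊤ := by
  refine (h K⟮x⟯).resolve_left fun hbot ↦ hx0 ?_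
  obtain ⟨k, rfl⟩ := mem_bot.1 (hbot ▸ mem_adjoin_simple_self K x)
  rw [Algebra.trace_algebraMap, nsmul_eq_mul, mul_eq_zero] at htr
  simp [htr.resolve_left (Nat.cast_ne_zero.2 finrank_pos.ne')]

theorem house'_nonneg {F : Type*} [Field F] (x : F) : 0 ≤ house' x :=
  Real.sSup_nonneg (by rintro _ ⟨z, -, rfl⟩; exact norm_nonneg z)

theorem norm_le_house'_of_aeval_eq_zero {F : Type*} [Field F] {x : F} (hx : IsIntegral ℤ x)
    {z : ℂ} (hz : aeval z (minpoly ℤ x) = 0) : ‖z‖ ≤ house' x :=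
  le_csSup (((minpoly ℤ x).rootSet ℂ).toFinite.image _).bddAbove
    ⟨z, mem_rootSet'.2 ⟨(Polynomial.map_ne_zero_iff (algebraMap ℤ ℂ).injective_int).2
      (minpoly.ne_zero hx), hz⟩, rfl⟩

theorem norm_le_house'_of_mem_roots_map_minpoly {K L : Type*} [Field K] [Field L] [Algebra K L]
    {x : L} (hx : IsIntegral ℤ x) (ρ : K →+* ℂ) {z : ℂ} (hz : z ∈ ((minpoly K x).map ρ).roots) :
    ‖z‖ ≤ house' x := by
  have hdvd : minpoly K x ∣ (minpoly ℤ x).map (algebraMap ℤ K) :=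
    minpoly.dvd K x (by rw [aeval_map_algebraMap, minpoly.aeval])
  have hdvd' := Polynomial.map_dvd ρ hdvd
  rw [Polynomial.map_map, RingHom.ext_int (ρ.comp (algebraMap ℤ K)) (algebraMap ℤ ℂ)] at hdvd'
  refine norm_le_house'_of_aeval_eq_zero hx ?_
  rw [aeval_def, ← eval_map]
  exact eval_eq_zero_of_dvd_of_eval_eq_zero hdvd' (isRoot_of_mem_roots hz)

theorem norm_embedding_aeval_derivative_minpoly_le {K L : Type*} [Field K] [Field L]
    [Algebra K L] {x : L} (hx : IsIntegral ℤ x) (τ : L →+* ℂ) :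
    ‖τ (aeval x (minpoly K x).derivative)‖ ≤ (2 * house' x) ^ ((minpoly K x).natDegree - 1) := by
  set ρ := τ.comp (algebraMap K L)
  have hmonic' : (minpoly K x).Monic := minpoly.monic (hx.tower_top (A := K))
  have hmonic : ((minpoly K x).map ρ).Monic := hmonic'.map ρ
  have hτ : ∀ p : K[X], τ (aeval x p) = (p.map ρ).eval (τ x) := fun p ↦ by
    rw [eval_map, aeval_def, hom_eval₂]
  have hroot : τ x ∈ ((minpoly K x).map ρ).roots :=
    (mem_roots hmonic.ne_zero).2 (by rw [IsRoot, ← hτ, minpoly.aeval, map_zero])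
  rw [hτ, ← derivative_map, ← hmonic'.natDegree_map ρ]
  exact (IsAlgClosed.splits _).norm_eval_derivative_le hmonic
    (fun a ha ↦ norm_le_house'_of_mem_roots_map_minpoly hx ρ ha) hroot

theorem norm_norm_le_pow_of_forall_norm_embedding_le {F : Type*} [Field F] [NumberField F]
    {y : F} {B : ℝ} (hB : ∀ σ : F →+* ℂ, ‖σ y‖ ≤ B) :
    ‖Algebra.norm ℚ y‖ ≤ B ^ finrank ℚ F := by
  calc ‖Algebra.norm ℚ y‖ = ‖∏ τ : F →ₐ[ℚ] ℂ, τ y‖ := by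
        rw [← Algebra.norm_eq_prod_embeddings, ← Rat.norm_cast_real, eq_ratCast,
          Complex.norm_ratCast, Real.norm_eq_abs]
    _ ≤ ∏ τ : F →ₐ[ℚ] ℂ, ‖τ y‖ := Finset.norm_prod_le _ _
    _ ≤ ∏ _τ : F →ₐ[ℚ] ℂ, B :=
        Finset.prod_le_prod (fun _ _ ↦ norm_nonneg _) fun τ _ ↦ hB τ
    _ = B ^ finrank ℚ F := by simp [AlgHom.card]

theorem absNorm_differentIdeal_le_norm_norm_aeval_derivative_minpoly {K L : Type*} [Field K]
    [NumberField K] [Field L] [NumberField L] [Algebra K L] {x : L} (hx : IsIntegral ℤ x)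
    (hgen : Algebra.adjoin K {x} = ⊤) :
    (Ideal.absNorm (differentIdeal (𝓞 K) (𝓞 L)) : ℝ) ≤
      ‖Algebra.norm ℚ (aeval x (minpoly K x).derivative)‖ := by
  set X : 𝓞 L := ⟨x, hx⟩
  set Y : 𝓞 L := aeval X (minpoly (𝓞 K) X).derivative
  have hY : (Y : L) = aeval x (minpoly K x).derivative := by
    rw [show x = algebraMap (𝓞 L) L X from rfl,
      minpoly.isIntegrallyClosed_eq_field_fractions K L (IsIntegralClosure.isIntegral (𝓞 K) L X),
      derivative_map, aeval_map_algebraMap]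
    exact (aeval_algebraMap_apply L X _).symm
  have hY0 : Y ≠ 0 := fun h ↦ (Algebra.IsSeparable.isSeparable K x).aeval_derivative_ne_zero
    (minpoly.aeval K x) (by rw [← hY, h]; rfl)
  have hle := Ideal.absNorm_le_abs_norm_of_mem
    (aeval_derivative_mem_differentIdeal (𝓞 K) K L X hgen) hY0
  rw [← hY, ← Algebra.coe_norm_int, ← Rat.norm_cast_real, Rat.cast_intCast, Real.norm_eq_abs]
  exact_mod_cast hle

theorem relDiscNorm_eq_absNorm_differentIdeal (K : Type*) [Field K] [NumberField K]
    {Kbar : Type*} [Field Kbar] [Algebra K Kbar] (L : IntermediateField K Kbar)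
    [NumberField L] [FiniteDimensional K L] :
    relDiscNorm K L = Ideal.absNorm (differentIdeal (𝓞 K) (𝓞 L)) :=
  dif_pos ‹_›

theorem Real.rpow_inv_natCast_le_of_le_pow {a b : ℝ} {m : ℕ} (ha : 0 ≤ a) (hb : 0 ≤ b)
    (hm : m ≠ 0) (h : a ≤ b ^ m) : a ^ (m : ℝ)⁻¹ ≤ b :=
  (rpow_inv_le_iff_of_pos ha hb (by positivity)).2 (by rwa [rpow_natCast])

/-- if `L/K` is an extension of degree `n ≥ 2` of a number field `K` of
degree `d` with no proper subextensions, then every nonzero trace-zero integer `x` of `L`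
satisfies `house(x) ≥ c · Δ_{L/K}^{1/(n(n-1)d)}`, with `c > 0` depending only on `n`
and `d`. -/
theorem house_ge_of_traceZero_integer (n d : ℕ) (hn : 2 ≤ n) :
    ∃ c : ℝ, 0 < c ∧
      ∀ (K : Type) [Field K] [NumberField K]
        (Kbar : Type) [Field Kbar] [Algebra K Kbar] [IsAlgClosure K Kbar],
        finrank ℚ K = d →
        ∀ L : IntermediateField K Kbar, finrank K L = n →
          (∀ M : IntermediateField K L, M = ⊥ ∨ M = ⊤) →
          ∀ x : L, x ≠ 0 → IsIntegral ℤ x → Algebra.trace K L x = 0 →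
            c * (relDiscNorm K L : ℝ) ^
                ((1 : ℝ) / ((n : ℝ) * ((n : ℝ) - 1) * (d : ℝ))) ≤
              house' x := by
  refine ⟨1 / 2, by norm_num, ?_⟩
  intro K _ _ Kbar _ _ _ hd L hL hsimple x hx0 hxint htr
  have : FiniteDimensional K L := .of_finrank_pos (by omega)
  have : NumberField L := .of_module_finite K L
  have hgen : K⟮x⟯ = ⊤ := adjoin_simple_eq_top_of_trace_eq_zero hsimple hx0 htr
  have hdeg : (minpoly K x).natDegree = n := by
    rw [← adjoin.finrank (.of_finite K x), hgen, finrank_top', hL]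
  have hΔ := absNorm_differentIdeal_le_norm_norm_aeval_derivative_minpoly hxint
    ((adjoin_simple_eq_top_iff_of_isAlgebraic (Algebra.IsAlgebraic.isAlgebraic x)).1 hgen)
  have hN := norm_norm_le_pow_of_forall_norm_embedding_le fun τ ↦
    norm_embedding_aeval_derivative_minpoly_le (K := K) hxint τ
  rw [hdeg, ← finrank_mul_finrank ℚ K L, hd, hL, ← pow_mul] at hN
  have hd0 : d ≠ 0 := hd ▸ finrank_pos.ne'
  have hexp : (1 : ℝ) / (n * (n - 1) * d) = (((n - 1) * (d * n) : ℕ) : ℝ)⁻¹ := by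
    push_cast [Nat.cast_sub (by omega : 1 ≤ n)]
    ring
  have hroot := Real.rpow_inv_natCast_le_of_le_pow (Nat.cast_nonneg _)
    (by linarith [house'_nonneg x])
    (Nat.mul_ne_zero (by omega) (Nat.mul_ne_zero hd0 (by omega))) (hΔ.trans hN)
  rw [← relDiscNorm_eq_absNorm_differentIdeal, ← hexp] at hroot
  linarith
end

section
/- Let n ≥ 2 be an integer. There exists a constant c_n > 0, depending only on n, such that every number field L of degree n over ℚ contains a nonzero element x ∈ 𝓞_L with Tr^L_ℚ(x) = 0 and house(x) ≤ c_n · D_L^{1/(2(n−1))}, where D_L = |disc(L/ℚ)|. -/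
/-!
Take `R = 4ⁿ D_L^{1/(2(n-1))}`, so that `R ^ (n - 1) = 4^{n(n-1)} √D_L` exceeds the Minkowski
bound `2ⁿ √D_L` of `𝓞_L`. Minkowski's convex body theorem, applied to a box of radius `R` at all
infinite places except one place `w₀`, where the radius is `1` (or, at a complex `w₀`, the real
part is cut down to `|Re| < 1` and the imaginary part to `|Im| < R`), gives a nonzero `a ∈ 𝓞_L`
with `house a ≤ R + 1` that is not a rational integer, since its conjugate at `w₀` has real part
of absolute value `< 1`. Then `x = n a - Tr(a)` is a nonzero algebraic integer of trace zero with
`house x ≤ 2 n house a`.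
-/

open NumberField Module NumberField.InfinitePlace NumberField.mixedEmbedding

open scoped NNReal ENNReal

theorem NNReal.rpow_one_div_two_mul_pow_eq_sqrt (x : ℝ≥0) {k : ℕ} (hk : k ≠ 0) :
    (x ^ ((1 : ℝ) / (2 * k))) ^ k = NNReal.sqrt x := by
  rw [← NNReal.rpow_natCast, ← NNReal.rpow_mul, NNReal.sqrt_eq_rpow]
  congr 1
  field_simp

section TraceZero

variable {K L : Type*} [Field K] [Field L] [Algebra K L] [FiniteDimensional K L]

theorem trace_finrank_smul_sub_algebraMap_trace (x : L) :
    Algebra.trace K L (finrank K L • x - algebraMap K L (Algebra.trace K L x)) = 0 := by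
  rw [map_sub, map_nsmul, Algebra.trace_algebraMap, sub_self]

theorem finrank_smul_sub_algebraMap_trace_ne_zero [CharZero K] {x : L}
    (hx : x ∉ Set.range (algebraMap K L)) :
    finrank K L • x - algebraMap K L (Algebra.trace K L x) ≠ 0 := by
  intro h
  have hn : (finrank K L : L) ≠ 0 := by
    rw [← map_natCast (algebraMap K L)]
    exact (map_ne_zero _).2 (Nat.cast_ne_zero.2 finrank_pos.ne')
  refine hx ⟨(finrank K L : K)⁻¹ * Algebra.trace K L x, ?_⟩
  rw [map_mul, ← sub_eq_zero.1 h, map_inv₀, map_natCast, nsmul_eq_mul, inv_mul_cancel_left₀ hn]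

end TraceZero

section House

variable {K : Type*} [Field K] [NumberField K]

theorem norm_le_house (x : K) (φ : K →+* ℂ) : ‖φ x‖ ≤ house x :=
  norm_le_pi_norm (canonicalEmbedding K x) φ

theorem house_le_of_forall_infinitePlace_le {x : K} {B : ℝ} (hB : 0 ≤ B)
    (h : ∀ w : InfinitePlace K, w x ≤ B) : house x ≤ B :=
  (pi_norm_le_iff_of_nonneg hB).2 fun φ => h (InfinitePlace.mk φ)

theorem house_ratCast (q : ℚ) : house (q : K) = |(q : ℝ)| := by
  rw [house, show canonicalEmbedding K q = fun _ => (q : ℂ) from funext fun φ => map_ratCast φ q,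
    pi_norm_const, Complex.norm_ratCast]

theorem abs_trace_le_finrank_mul_house (x : K) :
    |(Algebra.trace ℚ K x : ℝ)| ≤ finrank ℚ K * house x := by
  have hsum := trace_eq_sum_embeddings (E := ℂ) (K := ℚ) (x := x)
  calc |(Algebra.trace ℚ K x : ℝ)| = ‖algebraMap ℚ ℂ (Algebra.trace ℚ K x)‖ := by
        simp [Complex.norm_ratCast]
    _ ≤ ∑ σ : K →ₐ[ℚ] ℂ, ‖σ x‖ := hsum ▸ norm_sum_le _ _
    _ ≤ ∑ _σ : K →ₐ[ℚ] ℂ, house x := Finset.sum_le_sum fun σ _ => norm_le_house x σ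
    _ = finrank ℚ K * house x := by simp [AlgHom.card]

theorem house_finrank_smul_sub_algebraMap_trace_le (x : K) :
    house (finrank ℚ K • x - algebraMap ℚ K (Algebra.trace ℚ K x)) ≤
      2 * finrank ℚ K * house x := by
  rw [nsmul_eq_mul, eq_ratCast]
  calc house (finrank ℚ K * x - Algebra.trace ℚ K x)
      ≤ house (finrank ℚ K * x) + house ((Algebra.trace ℚ K x : ℚ) : K) := by
        simp only [house, map_sub]
        exact norm_sub_le _ _
    _ ≤ finrank ℚ K * house x + finrank ℚ K * house x := by
        rw [house_nat_mul, house_ratCast]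
        grw [abs_trace_le_finrank_mul_house]
    _ = 2 * finrank ℚ K * house x := by ring

theorem isIntegral_finrank_smul_sub_algebraMap_trace {x : K} (hx : IsIntegral ℤ x) :
    IsIntegral ℤ (finrank ℚ K • x - algebraMap ℚ K (Algebra.trace ℚ K x)) :=
  (hx.nsmul _).sub (Algebra.isIntegral_trace hx).algebraMap

end House

section Minkowski

variable {K : Type*} [Field K] [NumberField K]

theorem prod_ite_pow_mult [DecidableEq (InfinitePlace K)] (w₀ : InfinitePlace K) (c R : ℝ≥0) :
    ∏ w, (if w = w₀ then c else R) ^ w.mult = c ^ w₀.mult * R ^ (finrank ℚ K - w₀.mult) := by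
  rw [← Finset.mul_prod_erase _ _ (Finset.mem_univ w₀), if_pos rfl,
    Finset.prod_congr rfl fun w hw => by rw [if_neg (Finset.ne_of_mem_erase hw)],
    Finset.prod_pow_eq_pow_sum, ← sum_mult_eq, ← Finset.add_sum_erase _ _ (Finset.mem_univ w₀),
    Nat.add_sub_cancel_left]

theorem minkowskiBound_one_le :
    minkowskiBound K ↑1 ≤ ((2 ^ finrank ℚ K * NNReal.sqrt ‖discr K‖₊ : ℝ≥0) : ℝ≥0∞) := by
  rw [minkowskiBound, volume_fundamentalDomain_fractionalIdealLatticeBasis, Units.val_one,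
    FractionalIdeal.absNorm_one, Rat.cast_one, ENNReal.ofReal_one, one_mul,
    mixedEmbedding.finrank, volume_fundamentalDomain_latticeBasis, ENNReal.coe_mul,
    ENNReal.coe_pow, ENNReal.coe_ofNat, mul_comm (2 ^ _ : ℝ≥0∞)]
  gcongr
  exact mul_le_of_le_one_left' (pow_le_one₀ (by positivity) (ENNReal.inv_le_one.2 one_le_two))

theorem exists_ne_zero_abs_re_lt_one_of_isReal {w₀ : InfinitePlace K} (hw₀ : w₀.IsReal)
    {R : ℝ≥0} (h : minkowskiBound K ↑1 < (R : ℝ≥0∞) ^ (finrank ℚ K - 1)) :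
    ∃ a : 𝓞 K, a ≠ 0 ∧ |(w₀.embedding a).re| < 1 ∧ ∀ w : InfinitePlace K, w a < R + 1 := by
  classical
  have hvol : minkowskiBound K ↑1 <
      MeasureTheory.volume (convexBodyLT K fun w => if w = w₀ then 1 else R) := by
    rw [convexBodyLT_volume, prod_ite_pow_mult, mult_isReal ⟨w₀, hw₀⟩, one_pow, one_mul]
    refine h.trans_le (le_mul_of_one_le_left' ?_)
    exact_mod_cast one_le_convexBodyLTFactor K
  obtain ⟨a, ha, hlt⟩ := exists_ne_zero_mem_ringOfIntegers_lt K hvol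
  refine ⟨a, ha, ?_, fun w => (hlt w).trans_le ?_⟩
  · have := hlt w₀
    rw [if_pos rfl, ← norm_embedding_eq] at this
    exact (Complex.abs_re_le_norm _).trans_lt this
  · split_ifs <;> simp

theorem exists_ne_zero_abs_re_lt_one_of_isComplex {w₀ : InfinitePlace K} (hw₀ : w₀.IsComplex)
    {R : ℝ≥0} (h : minkowskiBound K ↑1 < (R : ℝ≥0∞) ^ (finrank ℚ K - 1)) :
    ∃ a : 𝓞 K, a ≠ 0 ∧ |(w₀.embedding a).re| < 1 ∧ ∀ w : InfinitePlace K, w a < R + 1 := by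
  classical
  have hvol : minkowskiBound K ↑1 <
      MeasureTheory.volume
        (convexBodyLT' K (fun w => if w = w₀ then NNReal.sqrt R else R) ⟨w₀, hw₀⟩) := by
    have hn : 2 ≤ finrank ℚ K := by
      rw [← sum_mult_eq, ← mult_isComplex ⟨w₀, hw₀⟩]
      exact Finset.single_le_sum (fun _ _ => Nat.zero_le _) (Finset.mem_univ w₀)
    rw [convexBodyLT'_volume, prod_ite_pow_mult, mult_isComplex ⟨w₀, hw₀⟩, NNReal.sq_sqrt,
      ← pow_succ', show finrank ℚ K - 2 + 1 = finrank ℚ K - 1 by omega]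
    refine h.trans_le (le_mul_of_one_le_left' ?_)
    exact_mod_cast one_le_convexBodyLT'Factor K
  obtain ⟨a, ha, hlt, hre, him⟩ := exists_ne_zero_mem_ringOfIntegers_lt' K ⟨w₀, hw₀⟩ hvol
  refine ⟨a, ha, hre, fun w => ?_⟩
  by_cases hw : w = w₀
  · subst hw
    rw [if_pos rfl, ← NNReal.coe_pow, NNReal.sq_sqrt] at him
    rw [← norm_embedding_eq]
    calc _ ≤ |(w.embedding a).re| + |(w.embedding a).im| := Complex.norm_le_abs_re_add_abs_im _
      _ < 1 + R := add_lt_add hre him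
      _ = R + 1 := add_comm _ _
  · refine (hlt w hw).trans_le ?_
    simp [hw]

theorem notMem_range_algebraMap_of_abs_re_lt_one {a : 𝓞 K} (ha : a ≠ 0) (φ : K →+* ℂ)
    (hre : |(φ a).re| < 1) : (a : K) ∉ Set.range (algebraMap ℚ K) := by
  rintro ⟨q, hq⟩
  have hq_int : IsIntegral ℤ q :=
    (isIntegral_algebraMap_iff (algebraMap ℚ K).injective).1 (hq ▸ a.isIntegral_coe)
  obtain ⟨m, rfl⟩ := IsIntegrallyClosed.isIntegral_iff.1 hq_int
  rw [eq_intCast, map_intCast] at hq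
  rw [← hq, map_intCast, Complex.intCast_re, ← Int.cast_abs, ← Int.cast_one, Int.cast_lt,
    Int.abs_lt_one_iff] at hre
  subst hre
  exact ha (RingOfIntegers.coe_eq_zero_iff.1 (by simpa using hq.symm))

theorem exists_notMem_range_algebraMap_house_le {R : ℝ≥0}
    (h : minkowskiBound K ↑1 < (R : ℝ≥0∞) ^ (finrank ℚ K - 1)) :
    ∃ a : 𝓞 K, (a : K) ∉ Set.range (algebraMap ℚ K) ∧ house (a : K) ≤ R + 1 := by
  obtain ⟨w₀⟩ : Nonempty (InfinitePlace K) := inferInstance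
  obtain ⟨a, ha, hre, hlt⟩ := w₀.isReal_or_isComplex.elim
    (exists_ne_zero_abs_re_lt_one_of_isReal · h) (exists_ne_zero_abs_re_lt_one_of_isComplex · h)
  exact ⟨a, notMem_range_algebraMap_of_abs_re_lt_one ha _ hre,
    house_le_of_forall_infinitePlace_le (by positivity) fun w => (hlt w).le⟩

end Minkowski

section Discriminant

variable {K : Type*} [Field K] [NumberField K]

theorem one_le_nnnorm_discr : 1 ≤ ‖discr K‖₊ := by
  rw [← NNReal.coe_le_coe, coe_nnnorm, Int.norm_eq_abs, NNReal.coe_one, ← Int.cast_abs,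
    ← Int.cast_one, Int.cast_le]
  exact Int.one_le_abs (discr_ne_zero K)

theorem minkowskiBound_one_lt_pow (hK : 2 ≤ finrank ℚ K) :
    minkowskiBound K ↑1 <
      ((4 ^ finrank ℚ K * ‖discr K‖₊ ^ ((1 : ℝ) / (2 * ((finrank ℚ K : ℝ) - 1))) : ℝ≥0) : ℝ≥0∞) ^
        (finrank ℚ K - 1) := by
  set n := finrank ℚ K
  have hsqrt : (‖discr K‖₊ ^ ((1 : ℝ) / (2 * ((n : ℝ) - 1)))) ^ (n - 1) =
      NNReal.sqrt ‖discr K‖₊ := by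
    rw [← NNReal.rpow_one_div_two_mul_pow_eq_sqrt _ (by omega : n - 1 ≠ 0),
      Nat.cast_sub (by omega), Nat.cast_one]
  have hpow : (2 : ℝ≥0) ^ n < (4 ^ n) ^ (n - 1) :=
    (pow_lt_pow_left₀ (by norm_num) (by norm_num) (by omega)).trans_le
      (le_self_pow₀ (one_le_pow₀ (by norm_num)) (by omega))
  refine minkowskiBound_one_le.trans_lt ?_
  rw [← ENNReal.coe_pow, ENNReal.coe_lt_coe, mul_pow, hsqrt]
  exact mul_lt_mul_of_pos_right hpow (NNReal.sqrt_pos.2 (nnnorm_pos.2 (discr_ne_zero K)))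

end Discriminant

/-- every number field `L` of degree `n ≥ 2` contains a nonzero integer of
trace zero and house at most `c_n · D_L^{1/(2(n-1))}`. -/
theorem exists_traceZero_integer_small_house (n : ℕ) (hn : 2 ≤ n) :
    ∃ c : ℝ, 0 < c ∧
      ∀ (L : Type) [Field L] [NumberField L], finrank ℚ L = n →
        ∃ x : L, x ≠ 0 ∧ IsIntegral ℤ x ∧ Algebra.trace ℚ L x = 0 ∧
          NumberField.house x ≤
            c * ((NumberField.discr L).natAbs : ℝ) ^ ((1 : ℝ) / (2 * ((n : ℝ) - 1))) := by
  refine ⟨2 * n * (4 ^ n + 1), by positivity, fun L _ _ hL => ?_⟩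
  subst hL
  obtain ⟨a, ha, ha_house⟩ :=
    exists_notMem_range_algebraMap_house_le (minkowskiBound_one_lt_pow hn)
  set P : ℝ≥0 := ‖discr L‖₊ ^ ((1 : ℝ) / (2 * ((finrank ℚ L : ℝ) - 1))) with hP
  have hP_one : 1 ≤ (P : ℝ) := by
    have hn_one : (1 : ℝ) ≤ finrank ℚ L := by exact_mod_cast (by omega : 1 ≤ finrank ℚ L)
    exact NNReal.one_le_coe.2 (NNReal.one_le_rpow one_le_nnnorm_discr (by positivity))
  refine ⟨_, finrank_smul_sub_algebraMap_trace_ne_zero ha,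
    isIntegral_finrank_smul_sub_algebraMap_trace a.isIntegral_coe,
    trace_finrank_smul_sub_algebraMap_trace _, ?_⟩
  have hP_eq : ((discr L).natAbs : ℝ) ^ ((1 : ℝ) / (2 * ((finrank ℚ L : ℝ) - 1))) = P := by
    simp [hP, NNReal.coe_rpow, Int.norm_eq_abs]
  calc _ ≤ 2 * finrank ℚ L * house (a : L) := house_finrank_smul_sub_algebraMap_trace_le _
    _ ≤ 2 * finrank ℚ L * (4 ^ finrank ℚ L * P + 1) := by gcongr; exact_mod_cast ha_house
    _ ≤ 2 * finrank ℚ L * (4 ^ finrank ℚ L + 1) * P := by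
        rw [mul_assoc _ _ (P : ℝ)]
        gcongr
        nlinarith
    _ = _ := by rw [hP_eq]
end

section
/- Let n ≥ 2 be an integer. There exists a constant c_n > 0, depending only on n, such that for every number field L of degree n over ℚ and every x ∈ 𝓞_L with ℚ(x) = L, one has house(x) ≥ c_n · D_L^{1/(n(n−1))}, where D_L = |disc(L/ℚ)|. In particular s(L) ≥ c_n · D_L^{1/(n(n−1))}, where s(L) = inf{house(x) : x ∈ 𝓞_L, ℚ(x) = L}. -/
open NumberField Module Finset IntermediateField

theorem abs_discr_le_of_int_basis (L : Type) [Field L] [NumberField L]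
    {ι : Type} [Fintype ι] [DecidableEq ι] (b : Basis ι ℚ L)
    (hb : ∀ i, IsIntegral ℤ (b i)) :
    |(NumberField.discr L : ℚ)| ≤ |Algebra.discr ℚ (⇑b)| := by
  classical
  set B := NumberField.integralBasis L
  set e := B.indexEquiv b
  set b'' := B.reindex e with hb''
  set P := b''.toMatrix b with hPdef
  have hP : ∀ i j, IsIntegral ℤ (P i j) := by
    intro i j
    have : P i j = (B.repr (b j)) (e.symm i) := by
      simp [hPdef, Basis.toMatrix_apply, hb'']
    rw [this]
    obtain ⟨y, hy⟩ : ∃ y : 𝓞 L, algebraMap (𝓞 L) L y = b j :=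
      ⟨⟨b j, hb j⟩, rfl⟩
    rw [← hy, NumberField.integralBasis_repr_apply]
    exact isIntegral_algebraMap
  have key : Algebra.discr ℚ (⇑b) = P.det ^ 2 * Algebra.discr ℚ (⇑b'') := by
    conv_lhs => rw [← b''.toMatrix_map_vecMul b]
    exact Algebra.discr_of_matrix_vecMul (⇑b'') P
  have hd'' : Algebra.discr ℚ (⇑b'') = (NumberField.discr L : ℚ) := by
    rw [hb'', Basis.coe_reindex, Algebra.discr_reindex, ← NumberField.coe_discr]
  obtain ⟨z, hz⟩ := IsIntegrallyClosed.isIntegral_iff.1 (IsIntegral.det hP)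
  have hzn : z ≠ 0 := by
    rintro rfl
    have h0 : Algebra.discr ℚ (⇑b) = 0 := by
      rw [key, ← hz]; simp
    exact Algebra.discr_not_zero_of_basis ℚ b h0
  have h1 : (1 : ℚ) ≤ P.det ^ 2 := by
    rw [← hz]
    have h : (1:ℤ) ≤ z^2 := by
      have := Int.one_le_abs (by simpa using hzn)
      nlinarith [abs_nonneg z, sq_abs z]
    calc (1:ℚ) = ((1:ℤ):ℚ) := by norm_num
      _ ≤ ((z^2 : ℤ):ℚ) := by exact_mod_cast h
      _ = (z:ℚ)^2 := by push_cast; ring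
  calc |(NumberField.discr L : ℚ)| = 1 * |(NumberField.discr L : ℚ)| := by ring
    _ ≤ P.det ^ 2 * |(NumberField.discr L : ℚ)| := by
        apply mul_le_mul_of_nonneg_right h1 (abs_nonneg _)
    _ = |P.det ^ 2 * (NumberField.discr L : ℚ)| := by
        rw [abs_mul, abs_of_nonneg (by positivity : (0:ℚ) ≤ P.det ^ 2)]
    _ = |Algebra.discr ℚ (⇑b)| := by rw [key, hd'']


theorem key_bound (n : ℕ) (hn : 2 ≤ n) (L : Type) [Field L] [NumberField L]
    (hL : finrank ℚ L = n) (x : L) (hx : IsIntegral ℤ x)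
    (hadj : IntermediateField.adjoin ℚ {x} = ⊤) :
    ((NumberField.discr L).natAbs : ℝ) ≤ (2 * NumberField.house x) ^ (n * (n - 1)) := by
  have hxQ : IsIntegral ℚ x := hx.tower_top
  let pb0 := IntermediateField.adjoin.powerBasis hxQ
  let e0 : ℚ⟮x⟯ ≃ₐ[ℚ] L := (IntermediateField.equivOfEq hadj).trans IntermediateField.topEquiv
  let pb := pb0.map e0
  have hgen : pb.gen = x := rfl
  have hfr : finrank ℚ L = pb.dim := pb.finrank
  have hdim : pb.dim = n := by rw [← hfr, hL]
  have hbint : ∀ i, IsIntegral ℤ (pb.basis i) := by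
    intro i
    rw [pb.basis_eq_pow i, hgen]
    exact hx.pow _
  let e : Fin pb.dim ≃ (L →ₐ[ℚ] ℂ) := Fintype.equivOfCardEq
    (by rw [Fintype.card_fin, AlgHom.card]; exact hfr.symm)
  have hprod := Algebra.discr_powerBasis_eq_prod ℚ ℂ pb e
  set d : ℚ := Algebra.discr ℚ (⇑pb.basis) with hd
  set h : ℝ := NumberField.house x with hh
  have h0 : 0 ≤ h := NumberField.house_nonneg x
  -- each embedding is bounded by the house
  have hemb : ∀ σ : L →ₐ[ℚ] ℂ, ‖σ x‖ ≤ h := by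
    intro σ
    have : σ x = NumberField.canonicalEmbedding L x σ.toRingHom :=
      (NumberField.canonicalEmbedding.apply_at σ.toRingHom x).symm
    rw [this]
    exact norm_le_pi_norm _ _
  -- norm bound
  have hnorm : ‖algebraMap ℚ ℂ d‖ ≤ (2 * h) ^ (n * (n - 1)) := by
    rw [hprod]
    have hfac : ∀ i : Fin pb.dim, ∀ j ∈ Finset.Ioi i,
        ‖(e j pb.gen - e i pb.gen) ^ 2‖ ≤ ((2*h)^2) := by
      intro i j _
      rw [norm_pow]
      have : ‖e j pb.gen - e i pb.gen‖ ≤ 2 * h := by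
        calc ‖e j pb.gen - e i pb.gen‖ ≤ ‖e j pb.gen‖ + ‖e i pb.gen‖ := norm_sub_le _ _
          _ ≤ h + h := by rw [hgen]; exact add_le_add (hemb _) (hemb _)
          _ = 2 * h := by ring
      exact pow_le_pow_left₀ (norm_nonneg _) this 2
    calc ‖∏ i : Fin pb.dim, ∏ j ∈ Finset.Ioi i, (e j pb.gen - e i pb.gen) ^ 2‖
        = ∏ i : Fin pb.dim, ∏ j ∈ Finset.Ioi i, ‖(e j pb.gen - e i pb.gen) ^ 2‖ := by
          rw [norm_prod]; exact Finset.prod_congr rfl fun i _ => norm_prod _ _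
      _ ≤ ∏ i : Fin pb.dim, ∏ _j ∈ Finset.Ioi i, ((2*h)^2) := by
          apply Finset.prod_le_prod
          · intro i _; positivity
          · intro i _
            exact Finset.prod_le_prod (fun j _ => norm_nonneg _) (hfac i)
      _ = (2*h) ^ (n * (n-1)) := by
          simp_rw [Finset.prod_const, ← pow_mul, Finset.prod_pow_eq_pow_sum]
          congr 1
          have hsum : ∑ i : Fin pb.dim, (Finset.Ioi i).card
              = ∑ i ∈ Finset.range pb.dim, (pb.dim - 1 - i) := by
            rw [← Fin.sum_univ_eq_sum_range (fun i => pb.dim - 1 - i)]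
            exact Finset.sum_congr rfl fun i _ => by rw [Fin.card_Ioi]
          have hrefl : ∑ i ∈ Finset.range pb.dim, (pb.dim - 1 - i)
              = ∑ i ∈ Finset.range pb.dim, i := by
            exact Finset.sum_range_reflect (fun i => i) pb.dim
          have hid : (∑ i ∈ Finset.range pb.dim, i) * 2 = pb.dim * (pb.dim - 1) :=
            Finset.sum_range_id_mul_two pb.dim
          calc ∑ i : Fin pb.dim, 2 * (Finset.Ioi i).card
              = (∑ i : Fin pb.dim, (Finset.Ioi i).card) * 2 := by
                rw [Finset.sum_mul]; exact Finset.sum_congr rfl fun i _ => by ring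
            _ = n * (n - 1) := by rw [hsum, hrefl, hid, hdim]
  -- now descend to ℝ
  have hcast : ‖algebraMap ℚ ℂ d‖ = |(d : ℝ)| := by
    rw [eq_ratCast, ← Complex.ofReal_ratCast, Complex.norm_real, Real.norm_eq_abs]
  have hlow : ((NumberField.discr L).natAbs : ℝ) ≤ |(d : ℝ)| := by
    have := abs_discr_le_of_int_basis L pb.basis hbint
    have hcast2 : ((NumberField.discr L).natAbs : ℝ) = |((NumberField.discr L : ℚ) : ℝ)| := by
      push_cast [Nat.cast_natAbs]
      norm_num
    rw [hcast2]
    have : |((NumberField.discr L : ℚ) : ℝ)| ≤ |((d : ℚ) : ℝ)| := by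
      rw [← Rat.cast_abs, ← Rat.cast_abs]
      exact_mod_cast this
    exact this
  calc ((NumberField.discr L).natAbs : ℝ) ≤ |(d : ℝ)| := hlow
    _ = ‖algebraMap ℚ ℂ d‖ := hcast.symm
    _ ≤ (2 * h) ^ (n * (n - 1)) := hnorm

/-- for a number field `L` of degree `n ≥ 2`, every integral generator `x` of
`L` satisfies `house(x) ≥ c_n · D_L^{1/(n(n-1))}`; in particular
`s(L) ≥ c_n · D_L^{1/(n(n-1))}` where `s(L)` is the infimum of the houses of integral
generators. -/
theorem house_of_integral_generator_ge (n : ℕ) (hn : 2 ≤ n) :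
    ∃ c : ℝ, 0 < c ∧
      ∀ (L : Type) [Field L] [NumberField L], finrank ℚ L = n →
        (∀ x : L, IsIntegral ℤ x → IntermediateField.adjoin ℚ {x} = ⊤ →
          c * ((NumberField.discr L).natAbs : ℝ) ^ ((1 : ℝ) / ((n : ℝ) * ((n : ℝ) - 1))) ≤
            NumberField.house x) ∧
        c * ((NumberField.discr L).natAbs : ℝ) ^ ((1 : ℝ) / ((n : ℝ) * ((n : ℝ) - 1))) ≤
          sInf {h : ℝ | ∃ x : L, IsIntegral ℤ x ∧ IntermediateField.adjoin ℚ {x} = ⊤ ∧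
            NumberField.house x = h} := by
  refine ⟨1/2, by norm_num, ?_⟩
  intro L _ _ hL
  have hn2 : (2:ℝ) ≤ (n:ℝ) := by exact_mod_cast hn
  have hmpos : (0:ℝ) < (n:ℝ) * ((n:ℝ) - 1) := by nlinarith
  have hmcast : ((n * (n-1) : ℕ) : ℝ) = (n:ℝ) * ((n:ℝ) - 1) := by
    push_cast [Nat.cast_sub (by omega : 1 ≤ n)]
    ring
  have key : ∀ x : L, IsIntegral ℤ x → IntermediateField.adjoin ℚ {x} = ⊤ →
      (1/2 : ℝ) * ((NumberField.discr L).natAbs : ℝ) ^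
        ((1 : ℝ) / ((n : ℝ) * ((n : ℝ) - 1))) ≤ NumberField.house x := by
    intro x hx hadj
    have hb := key_bound n hn L hL x hx hadj
    set h : ℝ := NumberField.house x with hh
    have h0 : 0 ≤ h := NumberField.house_nonneg x
    have h2 : (0:ℝ) ≤ 2 * h := by linarith
    have hstep : ((NumberField.discr L).natAbs : ℝ) ^
        ((1 : ℝ) / ((n : ℝ) * ((n : ℝ) - 1))) ≤ 2 * h := by
      have := Real.rpow_le_rpow (by positivity) hb
        (by positivity : (0:ℝ) ≤ (1 : ℝ) / ((n : ℝ) * ((n : ℝ) - 1)))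
      refine this.trans_eq ?_
      rw [← Real.rpow_natCast (2*h) (n*(n-1)), ← Real.rpow_mul h2, hmcast,
        mul_one_div, div_self (ne_of_gt hmpos), Real.rpow_one]
    linarith
  refine ⟨key, ?_⟩
  -- the set of houses of integral generators is nonempty
  have hne : ∃ x : L, IsIntegral ℤ x ∧ IntermediateField.adjoin ℚ {x} = ⊤ := by
    obtain ⟨α, hα⟩ := Field.exists_primitive_element ℚ L
    obtain ⟨y, hy, hint⟩ := exists_integral_multiples ℤ ℚ ({α} : Finset L)
    refine ⟨y • α, hint α (Finset.mem_singleton_self α), ?_⟩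
    have hmem : α ∈ IntermediateField.adjoin ℚ {y • α} := by
      have h1 : y • α ∈ IntermediateField.adjoin ℚ {y • α} :=
        IntermediateField.mem_adjoin_simple_self ℚ _
      have h2 : algebraMap ℚ L ((y:ℚ)⁻¹) * (y • α)
          ∈ IntermediateField.adjoin ℚ {y • α} :=
        mul_mem (IntermediateField.algebraMap_mem _ _) h1
      have hy' : ((y:ℤ):ℚ) ≠ 0 := by exact_mod_cast hy
      have heq : algebraMap ℚ L ((y:ℚ)⁻¹) * (y • α) = α := by
        have : (y : L) = algebraMap ℚ L ((y:ℤ):ℚ) := by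
          push_cast
          simp
        rw [zsmul_eq_mul, this, ← mul_assoc, ← map_mul, inv_mul_cancel₀ hy', map_one, one_mul]
      rwa [heq] at h2
    rw [eq_top_iff, ← hα]
    exact IntermediateField.adjoin_le_iff.2 (Set.singleton_subset_iff.2 hmem)
  obtain ⟨x, hx, hadj⟩ := hne
  refine le_csInf ⟨NumberField.house x, ⟨x, hx, hadj, rfl⟩⟩ ?_
  rintro b ⟨z, hz, hzadj, rfl⟩
  exact key z hz hzadj
end
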